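/- Let M ≥ 2, K ≥ 2 and d ≥ 1, let U : 𝒦 → Matrix 𝒮 𝒮 ℂ be any family of unitary matrices and ω any density matrix on 𝒮. Then the M-partite private state γ := W · (Φ ⊗ ω) · Wᴴ is not biseparable; that is, every multipartite private state with key dimension K ≥ 2 is genuinely multipartite entangled. -/

import Mathlib

open Matrix Kronecker
open scoped ComplexOrder

open scoped Classical in
noncomputable def matSqrt {n : Type*} [Fintype n] [DecidableEq n] (A : Matrix n n ℂ) :
    Matrix n n ℂ :=
  if h : A.PosSemidef then
    (h.1.eigenvectorUnitary : Matrix n n ℂ) *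
      Matrix.diagonal ((↑) ∘ (fun x : ℝ => Real.sqrt x) ∘ h.1.eigenvalues) *
      (star h.1.eigenvectorUnitary : Matrix n n ℂ)
  else 0

noncomputable def rootFidelity {n : Type*} [Fintype n] [DecidableEq n]
    (ρ σ : Matrix n n ℂ) : ℝ :=
  (matSqrt (matSqrt σ * ρ * matSqrt σ)).trace.re

noncomputable def fidelity {n : Type*} [Fintype n] [DecidableEq n]
    (ρ σ : Matrix n n ℂ) : ℝ :=
  (rootFidelity ρ σ) ^ 2

noncomputable def traceNorm {n : Type*} [Fintype n] [DecidableEq n] (A : Matrix n n ℂ) : ℝ :=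
  (matSqrt (Aᴴ * A)).trace.re

/-- The set of attainable type-II error values in hypothesis testing. -/
def testValues {n : Type*} [Fintype n] [DecidableEq n] (ρ σ : Matrix n n ℂ) (ε : ℝ) :
    Set ℝ :=
  { x | ∃ Λ : Matrix n n ℂ, Λ.PosSemidef ∧ (1 - Λ).PosSemidef ∧
      1 - ε ≤ (Λ * ρ).trace.re ∧ x = (Λ * σ).trace.re }

/-- ε-hypothesis-testing relative entropy. -/
noncomputable def Dh {n : Type*} [Fintype n] [DecidableEq n]
    (ρ σ : Matrix n n ℂ) (ε : ℝ) : ℝ :=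
  - Real.logb 2 (sInf (testValues ρ σ ε))

/-- GHZ unit vector. -/
noncomputable def ghz (M K : ℕ) : (Fin M → Fin K) → ℂ :=
  fun f => if ∃ c, ∀ m, f m = c then ((Real.sqrt K : ℂ))⁻¹ else 0

/-- GHZ rank-one projection. -/
noncomputable def ghzProj (M K : ℕ) : Matrix (Fin M → Fin K) (Fin M → Fin K) ℂ :=
  Matrix.vecMulVec (ghz M K) (star ∘ ghz M K)

/-- The twisting unitary. -/
def twist (M K d : ℕ)
    (U : (Fin M → Fin K) → Matrix (Fin M → Fin d) (Fin M → Fin d) ℂ) :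
    Matrix ((Fin M → Fin K) × (Fin M → Fin d)) ((Fin M → Fin K) × (Fin M → Fin d)) ℂ :=
  Matrix.of fun p q => if p.1 = q.1 then U p.1 p.2 q.2 else 0

/-- The privacy test `Π = W (Φ ⊗ 1) Wᴴ`. -/
noncomputable def privacyTest (M K d : ℕ)
    (U : (Fin M → Fin K) → Matrix (Fin M → Fin d) (Fin M → Fin d) ℂ) :
    Matrix ((Fin M → Fin K) × (Fin M → Fin d)) ((Fin M → Fin K) × (Fin M → Fin d)) ℂ :=
  twist M K d U * (ghzProj M K ⊗ₖ (1 : Matrix (Fin M → Fin d) (Fin M → Fin d) ℂ)) *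
    (twist M K d U)ᴴ

/-- The private state `γ = W (Φ ⊗ ω) Wᴴ`. -/
noncomputable def privateState (M K d : ℕ)
    (U : (Fin M → Fin K) → Matrix (Fin M → Fin d) (Fin M → Fin d) ℂ)
    (ω : Matrix (Fin M → Fin d) (Fin M → Fin d) ℂ) :
    Matrix ((Fin M → Fin K) × (Fin M → Fin d)) ((Fin M → Fin K) × (Fin M → Fin d)) ℂ :=
  twist M K d U * (ghzProj M K ⊗ₖ ω) * (twist M K d U)ᴴ

/-- A vector on `𝒦 × 𝒮` is product across the bipartition `J | Jᶜ` of the parties. -/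
def IsProductAcross {M K d : ℕ} (J : Set (Fin M))
    (v : (Fin M → Fin K) × (Fin M → Fin d) → ℂ) : Prop :=
  ∃ (v₁ : ((↥J) → Fin K) × ((↥J) → Fin d) → ℂ)
    (v₂ : ((↥(Jᶜ)) → Fin K) × ((↥(Jᶜ)) → Fin d) → ℂ),
    ∀ (f : Fin M → Fin K) (x : Fin M → Fin d),
      v (f, x) = v₁ (fun m => f m.1, fun m => x m.1) * v₂ (fun m => f m.1, fun m => x m.1)

/-- Biseparability: a finite convex combination of pure states, each product across
some nontrivial bipartition of the parties. -/
def Biseparable {M K d : ℕ}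
    (σ : Matrix ((Fin M → Fin K) × (Fin M → Fin d))
      ((Fin M → Fin K) × (Fin M → Fin d)) ℂ) : Prop :=
  ∃ (N : ℕ) (p : Fin N → ℝ) (w : Fin N → ((Fin M → Fin K) × (Fin M → Fin d)) → ℂ)
    (J : Fin N → Set (Fin M)),
    (∀ t, 0 ≤ p t) ∧ (∑ t, p t = 1) ∧
    (∀ t, ∑ i, ‖w t i‖ ^ 2 = 1) ∧
    (∀ t, J t ≠ ∅ ∧ J t ≠ Set.univ ∧ IsProductAcross (J t) (w t)) ∧
    σ = ∑ t, (p t : ℂ) • Matrix.vecMulVec (w t) (star ∘ w t)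

/-- Partial trace over the second tensor factor. -/
noncomputable def partialTrace₂ {A B : Type*} [Fintype B] (τ : Matrix (A × B) (A × B) ℂ) :
    Matrix A A ℂ :=
  Matrix.of fun a a' => ∑ b, τ (a, b) (a', b)

/-- Matrix logarithm of a Hermitian matrix via the spectral functional calculus. -/
noncomputable def matLog {n : Type*} [Fintype n] [DecidableEq n] (A : Matrix n n ℂ) :
    Matrix n n ℂ :=
  if hA : A.IsHermitian then
    (hA.eigenvectorUnitary : Matrix n n ℂ) *
      Matrix.diagonal (fun i => (Real.log (hA.eigenvalues i) : ℂ)) *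
      (star hA.eigenvectorUnitary : Matrix n n ℂ)
  else 0

/-!
The privacy test `Π = W (Φ ⊗ 1) Wᴴ` accepts `γ` with certainty: `Tr (Π γ) = Tr Φ² · Tr ω = 1`.
For a pure state `w`, writing `w_c` for its slice at the constant key string `c`, one finds
`Tr (Π w wᴴ) = K⁻¹ ‖∑_c (U c)ᴴ w_c‖² ≤ K⁻¹ (∑_c ‖w_c‖)²` by the triangle inequality and unitarity.
If `w` is a product across a cut `J | Jᶜ` with both sides nonempty, then `‖w_c‖² = α_c β_c`, where
`α` and `β` are the squared norms of the two factors at the restrictions of `c`, and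
`‖w‖² = ∑ α · ∑ β`; Cauchy–Schwarz then gives `∑_c ‖w_c‖ ≤ ‖w‖`. Hence every biseparable state
passes the test with probability at most `1/K < 1`.
-/

open WithLp

lemma sum_restrict_mul_restrict_compl {ι δ : Type*} [Fintype ι] [DecidableEq ι] [Fintype δ]
    (J : Set ι) [DecidablePred (· ∈ J)] (F : (J → δ) → ℝ) (G : (↥Jᶜ → δ) → ℝ) :
    ∑ y : ι → δ, F (fun m => y m) * G (fun m => y m) = (∑ a, F a) * ∑ b, G b := by
  rw [Finset.sum_mul_sum, ← Fintype.sum_prod_type']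
  exact (Equiv.piEquivPiSubtypeProd (· ∈ J) fun _ => δ).sum_comp fun p => F p.1 * G p.2

lemma sum_comp_const_le_sum {ι δ : Type*} [Fintype ι] [DecidableEq ι] [Fintype δ] (i : ι)
    {F : (ι → δ) → ℝ} (hF : ∀ a, 0 ≤ F a) : ∑ c : δ, F (fun _ => c) ≤ ∑ a, F a :=
  (Finset.sum_map _ ⟨fun c _ => c, fun _ _ h => congrFun h i⟩ F).symm.trans_le
    (Finset.sum_le_univ_sum_of_nonneg hF)

lemma norm_toLp_mulVec_of_mem_unitaryGroup {ι : Type*} [Fintype ι] [DecidableEq ι]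
    {V : Matrix ι ι ℂ} (hV : V ∈ unitaryGroup ι ℂ) (a : ι → ℂ) :
    ‖toLp 2 (V *ᵥ a)‖ = ‖toLp 2 a‖ := by
  rw [← toEuclideanCLM_toLp]
  exact ContinuousLinearMap.norm_map_of_mem_unitary (Unitary.map_mem _ hV) _

section RankOne

variable {n : Type*} [Fintype n]

lemma trace_conj_mul_vecMulVec_star (W P : Matrix n n ℂ) (w : n → ℂ) :
    (W * P * Wᴴ * vecMulVec w (star w)).trace = (P *ᵥ (Wᴴ *ᵥ w)) ⬝ᵥ star (Wᴴ *ᵥ w) := by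
  rw [mul_vecMulVec, trace_vecMulVec, ← mulVec_mulVec, ← mulVec_mulVec, dotProduct_comm,
    dotProduct_mulVec, star_mulVec, conjTranspose_conjTranspose, dotProduct_comm]

lemma vecMulVec_kronecker_one_mulVec_dotProduct_star {κ : Type*} [Fintype κ] [DecidableEq n]
    (φ : κ → ℂ) (u : κ × n → ℂ) :
    ((vecMulVec φ (star φ) ⊗ₖ (1 : Matrix n n ℂ)) *ᵥ u) ⬝ᵥ star u
      = ((‖toLp 2 (fun x => ∑ g, star (φ g) * u (g, x))‖ ^ 2 : ℝ) : ℂ) := by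
  rw [EuclideanSpace.norm_sq_eq]
  push_cast
  simp only [← Complex.mul_conj', dotProduct, mulVec, kroneckerMap_apply, vecMulVec_apply,
    one_apply, Fintype.sum_prod_type, mul_ite, mul_one, mul_zero, ite_mul, zero_mul,
    Finset.sum_ite_eq, Finset.mem_univ, if_true]
  rw [Finset.sum_comm]
  refine Finset.sum_congr rfl fun x _ => ?_
  simp only [map_sum, Finset.mul_sum, Finset.sum_mul]
  refine Finset.sum_congr rfl fun f _ => Finset.sum_congr rfl fun g _ => ?_
  simp only [Pi.star_apply, Complex.star_def, map_mul, Complex.conj_conj]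
  ring

end RankOne

lemma IsProductAcross.sum_norm_slice_const_le {M K d : ℕ} {J : Set (Fin M)}
    {w : (Fin M → Fin K) × (Fin M → Fin d) → ℂ} (hw : IsProductAcross J w) (hJ : J.Nonempty)
    (hJc : Jᶜ.Nonempty) :
    ∑ c : Fin K, ‖toLp 2 (fun x => w (fun _ => c, x))‖ ≤ ‖toLp 2 w‖ := by
  classical
  obtain ⟨v₁, v₂, hv⟩ := hw
  obtain ⟨j₁, hj₁⟩ := hJ
  obtain ⟨j₂, hj₂⟩ := hJc
  set α : (J → Fin K) → ℝ := fun a => ‖toLp 2 (fun x => v₁ (a, x))‖ ^ 2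
  set β : (↥Jᶜ → Fin K) → ℝ := fun b => ‖toLp 2 (fun x => v₂ (b, x))‖ ^ 2
  have hα : ∀ a, 0 ≤ α a := fun _ => sq_nonneg _
  have hβ : ∀ b, 0 ≤ β b := fun _ => sq_nonneg _
  have hslice : ∀ f, ‖toLp 2 (fun x => w (f, x))‖ ^ 2 = α (fun m => f m) * β (fun m => f m) := by
    intro f
    simp only [α, β, EuclideanSpace.norm_sq_eq, hv, norm_mul, mul_pow]
    exact sum_restrict_mul_restrict_compl J (fun a => ‖v₁ (fun m => f m, a)‖ ^ 2)
      (fun b => ‖v₂ (fun m => f m, b)‖ ^ 2)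
  have hnorm : ‖toLp 2 w‖ ^ 2 = (∑ a, α a) * ∑ b, β b := by
    rw [← sum_restrict_mul_restrict_compl J α β, EuclideanSpace.norm_sq_eq, Fintype.sum_prod_type]
    refine Finset.sum_congr rfl fun f _ => ?_
    rw [← hslice, EuclideanSpace.norm_sq_eq]
  calc ∑ c : Fin K, ‖toLp 2 (fun x => w (fun _ => c, x))‖
      = ∑ c : Fin K, √(α fun _ => c) * √(β fun _ => c) := by
        refine Finset.sum_congr rfl fun c _ => ?_
        rw [← Real.sqrt_mul (hα _), ← Real.sqrt_sq (norm_nonneg _)]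
        exact congrArg Real.sqrt (hslice _)
    _ ≤ √(∑ c : Fin K, α fun _ => c) * √(∑ c : Fin K, β fun _ => c) :=
        Real.sum_sqrt_mul_sqrt_le _ (fun _ => hα _) (fun _ => hβ _)
    _ ≤ √(∑ a, α a) * √(∑ b, β b) :=
        mul_le_mul
          (Real.sqrt_le_sqrt (sum_comp_const_le_sum ⟨j₁, hj₁⟩ hα))
          (Real.sqrt_le_sqrt (sum_comp_const_le_sum ⟨j₂, hj₂⟩ hβ))
          (Real.sqrt_nonneg _) (Real.sqrt_nonneg _)
    _ = ‖toLp 2 w‖ := by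
        rw [← Real.sqrt_mul (Finset.sum_nonneg fun a _ => hα a), ← hnorm,
          Real.sqrt_sq (norm_nonneg _)]

section Ghz

variable {M K : ℕ}

lemma sum_star_ghz_mul (hM : 0 < M) (a : (Fin M → Fin K) → ℂ) :
    ∑ f, star (ghz M K f) * a f = (√K : ℂ)⁻¹ * ∑ c : Fin K, a fun _ => c := by
  have hconst : Function.Injective fun (c : Fin K) (_ : Fin M) => c :=
    fun _ _ h => congrFun h ⟨0, hM⟩
  simp only [ghz, apply_ite star, star_zero, ite_mul, zero_mul, ← Finset.sum_filter]
  have hconstants : Finset.univ.filter (fun f : Fin M → Fin K => ∃ c, ∀ m, f m = c)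
      = Finset.univ.map ⟨_, hconst⟩ := by
    ext f
    simp [funext_iff, eq_comm]
  rw [hconstants, Finset.sum_map, ← Finset.mul_sum]
  simp

lemma star_ghz_dotProduct_ghz (hM : 0 < M) (hK : 0 < K) : star (ghz M K) ⬝ᵥ ghz M K = 1 := by
  have hc : ∀ c : Fin K, ghz M K (fun _ => c) = (√K : ℂ)⁻¹ := fun c => if_pos ⟨c, fun _ => rfl⟩
  simp only [dotProduct, Pi.star_apply]
  rw [sum_star_ghz_mul hM]
  simp only [hc, Finset.sum_const, Finset.card_univ, Fintype.card_fin, nsmul_eq_mul]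
  have hsqrt : (√K : ℂ) ≠ 0 := by exact_mod_cast (Real.sqrt_pos.2 (Nat.cast_pos.2 hK)).ne'
  have hsq : (K : ℂ) = √K * √K := by exact_mod_cast (Real.mul_self_sqrt (Nat.cast_nonneg K)).symm
  rw [hsq]
  field_simp

lemma ghzProj_mul_self (hM : 0 < M) (hK : 0 < K) : ghzProj M K * ghzProj M K = ghzProj M K := by
  rw [ghzProj, vecMulVec_mul_vecMulVec, show star ∘ ghz M K ⬝ᵥ ghz M K = 1 from star_ghz_dotProduct_ghz hM hK, one_smul]

lemma trace_ghzProj (hM : 0 < M) (hK : 0 < K) : (ghzProj M K).trace = 1 := by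
  rw [ghzProj, trace_vecMulVec, dotProduct_comm]
  exact star_ghz_dotProduct_ghz hM hK

end Ghz

section PrivacyTest

variable {M K d : ℕ} (U : (Fin M → Fin K) → Matrix (Fin M → Fin d) (Fin M → Fin d) ℂ)

lemma twist_eq_submatrix_blockDiagonal :
    twist M K d U = (blockDiagonal U).submatrix (Equiv.prodComm _ _) (Equiv.prodComm _ _) := by
  ext ⟨f, x⟩ ⟨g, y⟩
  simp [twist, blockDiagonal_apply]

lemma conjTranspose_twist_mul_twist (hU : ∀ f, U f ∈ unitaryGroup (Fin M → Fin d) ℂ) :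
    (twist M K d U)ᴴ * twist M K d U = 1 := by
  have hU' : ∀ f, (U f)ᴴ * U f = 1 := fun f => mem_unitaryGroup_iff'.1 (hU f)
  rw [twist_eq_submatrix_blockDiagonal, conjTranspose_submatrix,
    submatrix_mul_equiv _ _ (Equiv.prodComm _ _) (Equiv.prodComm _ _) (Equiv.prodComm _ _),
    blockDiagonal_conjTranspose, ← blockDiagonal_mul, funext hU', ← Pi.one_def, blockDiagonal_one,
    submatrix_one_equiv]

lemma conjTranspose_twist_mulVec (w : (Fin M → Fin K) × (Fin M → Fin d) → ℂ)
    (f : Fin M → Fin K) (x : Fin M → Fin d) :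
    ((twist M K d U)ᴴ *ᵥ w) (f, x) = ((U f)ᴴ *ᵥ fun y => w (f, y)) x := by
  simp [twist, mulVec, dotProduct, Fintype.sum_prod_type, apply_ite (starRingEnd ℂ), ite_mul]

lemma trace_privacyTest_mul_vecMulVec (hM : 0 < M) (w : (Fin M → Fin K) × (Fin M → Fin d) → ℂ) :
    (privacyTest M K d U * vecMulVec w (star w)).trace
      = (((K : ℝ)⁻¹ * ‖∑ c : Fin K, toLp 2 ((U fun _ => c)ᴴ *ᵥ fun y => w (fun _ => c, y))‖ ^ 2
        : ℝ) : ℂ) := by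
  have hΦ : ghzProj M K = vecMulVec (ghz M K) (star (ghz M K)) := rfl
  rw [privacyTest, trace_conj_mul_vecMulVec_star, hΦ,
    vecMulVec_kronecker_one_mulVec_dotProduct_star]
  have hS : toLp 2 (fun x => ∑ g, star (ghz M K g) * ((twist M K d U)ᴴ *ᵥ w) (g, x))
      = (√K : ℂ)⁻¹ • ∑ c : Fin K, toLp 2 ((U fun _ => c)ᴴ *ᵥ fun y => w (fun _ => c, y)) := by
    ext x
    simp only [conjTranspose_twist_mulVec, PiLp.smul_apply, WithLp.ofLp_sum,
      Finset.sum_apply, smul_eq_mul]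
    exact sum_star_ghz_mul hM _
  rw [hS, norm_smul, mul_pow, norm_inv, Complex.norm_real, Real.norm_of_nonneg (Real.sqrt_nonneg _),
    inv_pow, Real.sq_sqrt (Nat.cast_nonneg _)]

lemma IsProductAcross.re_trace_privacyTest_mul_vecMulVec_le (hM : 0 < M)
    (hU : ∀ f, U f ∈ unitaryGroup (Fin M → Fin d) ℂ) {J : Set (Fin M)}
    {w : (Fin M → Fin K) × (Fin M → Fin d) → ℂ} (hw : IsProductAcross J w) (hJ : J.Nonempty)
    (hJc : Jᶜ.Nonempty) :
    (privacyTest M K d U * vecMulVec w (star w)).trace.re ≤ (K : ℝ)⁻¹ * ‖toLp 2 w‖ ^ 2 := by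
  rw [trace_privacyTest_mul_vecMulVec U hM, Complex.ofReal_re]
  gcongr
  calc ‖∑ c : Fin K, toLp 2 ((U fun _ => c)ᴴ *ᵥ fun y => w (fun _ => c, y))‖
      ≤ ∑ c : Fin K, ‖toLp 2 ((U fun _ => c)ᴴ *ᵥ fun y => w (fun _ => c, y))‖ := norm_sum_le _ _
    _ = ∑ c : Fin K, ‖toLp 2 fun y => w (fun _ => c, y)‖ :=
        Finset.sum_congr rfl fun c _ =>
          norm_toLp_mulVec_of_mem_unitaryGroup (Unitary.star_mem (hU _)) _
    _ ≤ ‖toLp 2 w‖ := hw.sum_norm_slice_const_le hJ hJc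

lemma trace_privacyTest_mul_privateState (hM : 0 < M) (hK : 0 < K)
    (hU : ∀ f, U f ∈ unitaryGroup (Fin M → Fin d) ℂ) {ω : Matrix (Fin M → Fin d) (Fin M → Fin d) ℂ}
    (hω : ω.trace = 1) :
    (privacyTest M K d U * privateState M K d U ω).trace = 1 := by
  set W := twist M K d U
  have hW : Wᴴ * W = 1 := conjTranspose_twist_mul_twist U hU
  have hprod : privacyTest M K d U * privateState M K d U ω
      = W * ((ghzProj M K ⊗ₖ 1) * (ghzProj M K ⊗ₖ ω)) * Wᴴ := by
    simp only [privacyTest, privateState, Matrix.mul_assoc]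
    rw [← Matrix.mul_assoc Wᴴ W, hW, Matrix.one_mul]
  rw [hprod, trace_mul_cycle, hW, Matrix.one_mul, ← mul_kronecker_mul, ghzProj_mul_self hM hK,
    Matrix.one_mul, trace_kronecker, trace_ghzProj hM hK, hω, one_mul]

end PrivacyTest

theorem stmt_13_general (M K d : ℕ) (hM : 2 ≤ M) (hK : 2 ≤ K)
    (U : (Fin M → Fin K) → Matrix (Fin M → Fin d) (Fin M → Fin d) ℂ)
    (hU : ∀ f, U f ∈ Matrix.unitaryGroup (Fin M → Fin d) ℂ)
    (ω : Matrix (Fin M → Fin d) (Fin M → Fin d) ℂ)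
    (hωtr : ω.trace = 1) :
    ¬ Biseparable (privateState M K d U ω) := by
  rintro ⟨N, p, w, J, hp, hp_sum, hw_norm, hJ, hσ⟩
  have hpure : ∀ t, (privacyTest M K d U * vecMulVec (w t) (star (w t))).trace.re ≤ (K : ℝ)⁻¹ := by
    intro t
    obtain ⟨hJ_ne, hJ_univ, hw⟩ := hJ t
    simpa [EuclideanSpace.norm_sq_eq, hw_norm t] using
      hw.re_trace_privacyTest_mul_vecMulVec_le U (by omega) hU
        (Set.nonempty_iff_ne_empty.2 hJ_ne) (Set.nonempty_compl.2 hJ_univ)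
  have hK_inv : (K : ℝ)⁻¹ < 1 := inv_lt_one_of_one_lt₀ (by exact_mod_cast hK)
  have : (1 : ℝ) ≤ (K : ℝ)⁻¹ := calc
    1 = (privacyTest M K d U * privateState M K d U ω).trace.re := by
        rw [trace_privacyTest_mul_privateState U (by omega) (by omega) hU hωtr, Complex.one_re]
    _ = ∑ t, p t * (privacyTest M K d U * vecMulVec (w t) (star (w t))).trace.re := by
        simp only [hσ, Matrix.mul_sum, trace_sum, Matrix.mul_smul, trace_smul, Complex.re_sum,
          smul_eq_mul, Complex.re_ofReal_mul]
        rfl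
    _ ≤ ∑ t, p t * (K : ℝ)⁻¹ :=
        Finset.sum_le_sum fun t _ => mul_le_mul_of_nonneg_left (hpure t) (hp t)
    _ = (K : ℝ)⁻¹ := by rw [← Finset.sum_mul, hp_sum, one_mul]
  linarith

/-- every multipartite private state with key dimension `K ≥ 2` is
genuinely multipartite entangled, i.e. not biseparable. -/
theorem stmt_13 (M K d : ℕ) (hM : 2 ≤ M) (hK : 2 ≤ K) (hd : 1 ≤ d)
    (U : (Fin M → Fin K) → Matrix (Fin M → Fin d) (Fin M → Fin d) ℂ)
    (hU : ∀ f, U f ∈ Matrix.unitaryGroup (Fin M → Fin d) ℂ)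
    (ω : Matrix (Fin M → Fin d) (Fin M → Fin d) ℂ)
    (hω : ω.PosSemidef) (hωtr : ω.trace = 1) :
    ¬ Biseparable (privateState M K d U ω) :=
  stmt_13_general M K d hM hK U hU ω hωtr
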